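/- If the system has a GED on J with data (K, λ₊, λ₋, P_n^±), then the ranges of the projectors are uniquely determined by range(P_m^+) = { x ∈ ℝ^d : there exists C > 0 with ‖Φ(n,m)x‖ ≤ C λ₊^{n−m}‖x‖ for all n ≥ m in J }. -/

import Mathlib

open scoped RealInnerProductSpace ENNReal
open Filter

noncomputable section

/-- `d`-dimensional Euclidean space `ℝ^d`. -/
abbrev Euc (d : ℕ) := EuclideanSpace ℝ (Fin d)

/-- Bounded linear operators on `ℝ^d` (i.e. `d × d` matrices, with the operator norm). -/
abbrev Op (d : ℕ) := Euc d →L[ℝ] Euc d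

/-- The maximal principal angle between two subspaces of `ℝ^d`,
`∠(V,W) = arccos( min_{v ∈ V, ‖v‖=1} max_{w ∈ W, ‖w‖=1} vᵀw )`. -/
def subAngle {d : ℕ} (V W : Submodule ℝ (Euc d)) : ℝ :=
  Real.arccos (sInf {x : ℝ | ∃ v ∈ V, ‖v‖ = 1 ∧
    x = sSup {y : ℝ | ∃ w ∈ W, ‖w‖ = 1 ∧ y = ⟪v, w⟫}})

/-- `Φ` is the solution operator of `u_{n+1} = A_n u_n` on `J = {n ∈ ℤ : n ≥ n₀}`:
`Φ(n,n) = I` and `Φ(n+1,m) = A_n Φ(n,m)` (for invertible `A_n` this uniquely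
determines `Φ(n,m)` for all `n, m ∈ J`, forward and backward). -/
def IsSolOp {d : ℕ} (n₀ : ℤ) (A : ℤ → Op d) (Φ : ℤ → ℤ → Op d) : Prop :=
  (∀ n : ℤ, n₀ ≤ n → Φ n n = 1) ∧
  (∀ n m : ℤ, n₀ ≤ n → n₀ ≤ m → Φ (n + 1) m = (A n).comp (Φ n m))

/-- The rate `λ^k` of a generalized exponential dichotomy, with the conventions
`0^k = 0` (used for `k ≥ 0`) and `∞^k = 0` (used for `k ≤ 0`). -/
def dichPow (lam : ℝ≥0∞) (k : ℤ) : ℝ≥0∞ :=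
  if lam = 0 ∨ lam = ⊤ then 0 else lam ^ k

/-- Generalized exponential dichotomy (GED) on `J = {n ∈ ℤ : n ≥ n₀}` with data
`(K, λ₊, λ₋, P_n^±)`, where `P_n^- = 1 - P_n^+`: rates `0 ≤ λ₊ < λ₋ ≤ ∞` (the
pair `(0,∞)` excluded), invariant projectors, and the estimates
`‖Φ(n,m)P_m^+‖ ≤ K λ₊^{n−m}` for `n ≥ m`, `‖Φ(n,m)P_m^-‖ ≤ K λ₋^{n−m}` for `n ≤ m`. -/
def GED {d : ℕ} (n₀ : ℤ) (Φ : ℤ → ℤ → Op d) (K : ℝ) (lamP lamM : ℝ≥0∞)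
    (P : ℤ → Op d) : Prop :=
  0 < K ∧ lamP < lamM ∧ ¬(lamP = 0 ∧ lamM = ⊤) ∧
  (∀ n : ℤ, n₀ ≤ n → (P n).comp (P n) = P n) ∧
  (∀ n m : ℤ, n₀ ≤ n → n₀ ≤ m → (P n).comp (Φ n m) = (Φ n m).comp (P m)) ∧
  (∀ n m : ℤ, n₀ ≤ m → m ≤ n →
    (‖(Φ n m).comp (P m)‖₊ : ℝ≥0∞) ≤ ENNReal.ofReal K * dichPow lamP (n - m)) ∧
  (∀ n m : ℤ, n₀ ≤ n → n ≤ m →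
    (‖(Φ n m).comp (1 - P m)‖₊ : ℝ≥0∞) ≤ ENNReal.ofReal K * dichPow lamM (n - m))

/-!
A vector `x` with `‖Φ(n,m)x‖ ≤ C λ₊^{n-m}‖x‖` splits as `x = P_m^+ x + y` with `y = P_m^- x`.
Pulling `y` back from time `n ≥ m` through the unstable estimate gives
`‖y‖ ≤ K C (λ₊/λ₋)^{n-m} ‖x‖`, which tends to `0` since `λ₊ < λ₋`; hence `y = 0`.
Conversely the stable estimate applied to `x = P_m^+ x` gives the bound with `C = K`.
-/

open scoped Topology

section DichPow

theorem dichPow_zero (k : ℤ) : dichPow 0 k = 0 := by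
  simp [dichPow]

theorem dichPow_top (k : ℤ) : dichPow ⊤ k = 0 := by
  simp [dichPow]

theorem dichPow_of_ne_zero_of_ne_top {lam : ℝ≥0∞} (h0 : lam ≠ 0) (htop : lam ≠ ⊤) (k : ℤ) :
    dichPow lam k = lam ^ k :=
  if_neg (not_or.2 ⟨h0, htop⟩)

theorem tendsto_dichPow_neg_mul_dichPow {lamP lamM : ℝ≥0∞} (hlt : lamP < lamM) :
    Tendsto (fun k : ℕ => dichPow lamM (-k) * dichPow lamP k) atTop (𝓝 0) := by
  rcases eq_or_ne lamM ⊤ with rfl | hMtop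
  · simp [dichPow_top]
  rcases eq_or_ne lamP 0 with rfl | hP0
  · simp [dichPow_zero]
  have hM0 : lamM ≠ 0 := ne_bot_of_gt hlt
  have hPtop : lamP ≠ ⊤ := ne_top_of_lt hlt
  have hratio : ∀ k : ℕ, dichPow lamM (-k) * dichPow lamP k = (lamP / lamM) ^ k := by
    intro k
    rw [dichPow_of_ne_zero_of_ne_top hM0 hMtop, dichPow_of_ne_zero_of_ne_top hP0 hPtop,
      ENNReal.zpow_neg, zpow_natCast, zpow_natCast, ENNReal.div_eq_inv_mul, mul_pow,
      ENNReal.inv_pow]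
  simp_rw [hratio]
  refine ENNReal.tendsto_pow_atTop_nhds_zero_of_lt_one ?_
  rwa [ENNReal.div_lt_iff (Or.inl hM0) (Or.inl hMtop), one_mul]

end DichPow

section SolOp

variable {d : ℕ} {n₀ : ℤ} {A : ℤ → Op d} {Φ : ℤ → ℤ → Op d}

/-- The cocycle property; going backward in time uses the invertibility of the `A n`. -/
theorem IsSolOp.comp_eq (hΦ : IsSolOp n₀ A Φ) (hA : ∀ n : ℤ, n₀ ≤ n → IsUnit (A n))
    {m k : ℤ} (hm : n₀ ≤ m) (hk : n₀ ≤ k) {n : ℤ} (hn : n₀ ≤ n) :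
    Φ n k = (Φ n m).comp (Φ m k) := by
  obtain ⟨hid, hrec⟩ := hΦ
  have base : Φ m k = (Φ m m).comp (Φ m k) := by
    rw [hid m hm, ContinuousLinearMap.one_def, ContinuousLinearMap.id_comp]
  rcases le_total m n with hmn | hnm
  · induction n, hmn using Int.leInduction with
    | base => exact base
    | succ n hmn ih =>
      rw [hrec n k (hm.trans hmn) hk, hrec n m (hm.trans hmn) hm, ih (hm.trans hmn),
        ContinuousLinearMap.comp_assoc]
  · induction n, hnm using Int.leInductionDown with
    | base => exact base
    | pred n hnm ih =>
      have hn' : n₀ ≤ n := by omega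
      have hrec' : ∀ j, n₀ ≤ j → Φ n j = (A (n - 1)).comp (Φ (n - 1) j) := fun j hj => by
        simpa using hrec (n - 1) j hn hj
      refine (hA (n - 1) hn).mul_left_cancel ?_
      simp only [ContinuousLinearMap.mul_def]
      rw [← hrec' k hk, ih hn', hrec' m hm, ContinuousLinearMap.comp_assoc]

theorem IsSolOp.apply_apply_eq_self (hΦ : IsSolOp n₀ A Φ)
    (hA : ∀ n : ℤ, n₀ ≤ n → IsUnit (A n)) {n m : ℤ} (hn : n₀ ≤ n) (hm : n₀ ≤ m)
    (x : Euc d) : Φ m n (Φ n m x) = x := by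
  rw [← ContinuousLinearMap.comp_apply, ← hΦ.comp_eq hA hn hm hm, hΦ.1 m hm]
  rfl

end SolOp

theorem enorm_apply_of_mem_range_le {d : ℕ} {T P : Op d} (hP : P.comp P = P)
    {x : Euc d} (hx : x ∈ Set.range P) : ‖T x‖ₑ ≤ ‖T.comp P‖ₑ * ‖x‖ₑ := by
  obtain ⟨y, rfl⟩ := hx
  have : T.comp P (P y) = T (P y) := by
    rw [ContinuousLinearMap.comp_apply, ← ContinuousLinearMap.comp_apply P P, hP]
  exact this ▸ (T.comp P).le_opENorm (P y)

namespace GED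

variable {d : ℕ} {n₀ : ℤ} {A : ℤ → Op d} {Φ : ℤ → ℤ → Op d} {K : ℝ} {lamP lamM : ℝ≥0∞}
  {P : ℤ → Op d}

theorem enorm_apply_le_of_mem_range (hGED : GED n₀ Φ K lamP lamM P) {m n : ℤ} (hm : n₀ ≤ m)
    (hmn : m ≤ n) {x : Euc d} (hx : x ∈ Set.range (P m)) :
    ‖Φ n m x‖ₑ ≤ ENNReal.ofReal K * dichPow lamP (n - m) * ‖x‖ₑ := by
  obtain ⟨-, -, -, hidem, -, hstable, -⟩ := hGED
  exact (enorm_apply_of_mem_range_le (hidem m hm) hx).trans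
    (mul_le_mul_left (hstable n m hm hmn) _)

theorem one_sub_apply_eq_apply_one_sub (hGED : GED n₀ Φ K lamP lamM P) {n m : ℤ} (hn : n₀ ≤ n)
    (hm : n₀ ≤ m) (x : Euc d) : (1 - P n) (Φ n m x) = Φ n m ((1 - P m) x) := by
  obtain ⟨-, -, -, -, hinv, -, -⟩ := hGED
  have hcomm : P n (Φ n m x) = Φ n m (P m x) := by
    rw [← ContinuousLinearMap.comp_apply, hinv n m hn hm,
      ContinuousLinearMap.comp_apply]
  simp only [sub_apply, one_apply_eq_self, hcomm, map_sub]

theorem enorm_one_sub_apply_le (hGED : GED n₀ Φ K lamP lamM P) (hΦ : IsSolOp n₀ A Φ)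
    (hA : ∀ n : ℤ, n₀ ≤ n → IsUnit (A n)) {m n : ℤ} (hm : n₀ ≤ m) (hmn : m ≤ n)
    (x : Euc d) :
    ‖(1 - P m) x‖ₑ ≤ ENNReal.ofReal K * dichPow lamM (m - n) * ‖Φ n m x‖ₑ := by
  have hn : n₀ ≤ n := hm.trans hmn
  calc ‖(1 - P m) x‖ₑ = ‖(Φ m n).comp (1 - P n) (Φ n m x)‖ₑ := by
        rw [ContinuousLinearMap.comp_apply, hGED.one_sub_apply_eq_apply_one_sub hn hm,
          hΦ.apply_apply_eq_self hA hn hm]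
    _ ≤ ‖(Φ m n).comp (1 - P n)‖ₑ * ‖Φ n m x‖ₑ := ContinuousLinearMap.le_opENorm _ _
    _ ≤ ENNReal.ofReal K * dichPow lamM (m - n) * ‖Φ n m x‖ₑ :=
        mul_le_mul_left (hGED.2.2.2.2.2.2 m n hm hmn) _

theorem one_sub_apply_eq_zero_of_enorm_apply_le (hGED : GED n₀ Φ K lamP lamM P)
    (hΦ : IsSolOp n₀ A Φ) (hA : ∀ n : ℤ, n₀ ≤ n → IsUnit (A n)) {m : ℤ} (hm : n₀ ≤ m)
    {x : Euc d} {C : ℝ}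
    (hx : ∀ n : ℤ, m ≤ n → ‖Φ n m x‖ₑ ≤ ENNReal.ofReal C * dichPow lamP (n - m) * ‖x‖ₑ) :
    (1 - P m) x = 0 := by
  set B := ENNReal.ofReal K * ENNReal.ofReal C * ‖x‖ₑ
  have hbound : ∀ k : ℕ,
      ‖(1 - P m) x‖ₑ ≤ B * (dichPow lamM (-k) * dichPow lamP k) := by
    intro k
    have hmk : m ≤ m + k := by omega
    calc ‖(1 - P m) x‖ₑ
        ≤ ENNReal.ofReal K * dichPow lamM (m - (m + k)) * ‖Φ (m + k) m x‖ₑ :=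
          hGED.enorm_one_sub_apply_le hΦ hA hm hmk x
      _ ≤ ENNReal.ofReal K * dichPow lamM (m - (m + k)) *
          (ENNReal.ofReal C * dichPow lamP (m + k - m) * ‖x‖ₑ) := by
          gcongr; exact hx _ hmk
      _ = B * (dichPow lamM (-k) * dichPow lamP k) := by
          rw [show m - (m + k) = -(k : ℤ) by ring, show m + k - m = (k : ℤ) by ring]
          ring
  have hlim : Tendsto (fun k : ℕ => B * (dichPow lamM (-k) * dichPow lamP k)) atTop (𝓝 0) := by
    simpa using ENNReal.Tendsto.const_mul (tendsto_dichPow_neg_mul_dichPow hGED.2.1)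
      (Or.inr (by finiteness))
  exact enorm_eq_zero.1 (le_zero_iff.1 (ge_of_tendsto' hlim hbound))

end GED

theorem statement4_general {d : ℕ} (n₀ : ℤ) (A : ℤ → Op d) (Φ : ℤ → ℤ → Op d)
    (hA : ∀ n : ℤ, n₀ ≤ n → IsUnit (A n))
    (hΦ : IsSolOp n₀ A Φ)
    (K : ℝ) (lamP lamM : ℝ≥0∞) (P : ℤ → Op d)
    (hGED : GED n₀ Φ K lamP lamM P) :
    ∀ m : ℤ, n₀ ≤ m →
      Set.range ⇑(P m) =
        {x : Euc d | ∃ C : ℝ, 0 < C ∧ ∀ n : ℤ, m ≤ n →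
          (‖Φ n m x‖₊ : ℝ≥0∞) ≤ ENNReal.ofReal C * dichPow lamP (n - m) * (‖x‖₊ : ℝ≥0∞)} := by
  intro m hm
  ext x
  constructor
  · intro hx
    exact ⟨K, hGED.1, fun n hmn => hGED.enorm_apply_le_of_mem_range hm hmn hx⟩
  · rintro ⟨C, -, hC⟩
    have hx : (1 - P m) x = 0 := hGED.one_sub_apply_eq_zero_of_enorm_apply_le hΦ hA hm hC
    refine ⟨x, (sub_eq_zero.1 ?_).symm⟩
    simpa using hx

/-- for a GED the ranges of the projectors are uniquely determined by
`range(P_m^+) = {x : ∃ C>0, ‖Φ(n,m)x‖ ≤ C λ₊^{n−m}‖x‖ for all n ≥ m in J}`. -/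
theorem statement4 {d : ℕ} (n₀ : ℤ) (A : ℤ → Op d) (Φ : ℤ → ℤ → Op d)
    (hA : ∀ n : ℤ, n₀ ≤ n → IsUnit (A n))
    (hAbd : ∃ M : ℝ, ∀ n : ℤ, n₀ ≤ n → ‖A n‖ ≤ M ∧ ‖Ring.inverse (A n)‖ ≤ M)
    (hΦ : IsSolOp n₀ A Φ)
    (K : ℝ) (lamP lamM : ℝ≥0∞) (P : ℤ → Op d)
    (hGED : GED n₀ Φ K lamP lamM P) :
    ∀ m : ℤ, n₀ ≤ m →
      Set.range ⇑(P m) =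
        {x : Euc d | ∃ C : ℝ, 0 < C ∧ ∀ n : ℤ, m ≤ n →
          (‖Φ n m x‖₊ : ℝ≥0∞) ≤ ENNReal.ofReal C * dichPow lamP (n - m) * (‖x‖₊ : ℝ≥0∞)} :=
  statement4_general n₀ A Φ hA hΦ K lamP lamM P hGED
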